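/- With W = V ⊥ P and φ: C(W) → M₂(C(V)) the Vahlen isomorphism, for all x ∈ C(W) one has φ(x') = α(φ(x)), φ(x*) = β(φ(x)), and φ(x̄) = γ(φ(x)), where for A = [[a,b],[c,d]] ∈ M₂(C(V)) one defines α(A) = [[a',−b'],[−c',d']], β(A) = [[d̄,b̄],[c̄,ā]], and γ(A) = [[d*,−b*],[−c*,a*]]. -/
import Mathlib
set_option maxHeartbeats 1000000

open CliffordAlgebra

lemma stmt_8_add_lit {A : Type*} [Ring A] (a b c d e f g' h' : A) :
    (!![a,b;c,d] + !![e,f;g',h'] : Matrix (Fin 2) (Fin 2) A) = !![a+e, b+f; c+g', d+h'] := by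
  ext i j; fin_cases i <;> fin_cases j <;> simp

lemma stmt_8_alg_lit {F : Type*} [CommRing F] {A : Type*} [Ring A] [Algebra F A] (r : F) :
    (algebraMap F (Matrix (Fin 2) (Fin 2) A)) r = !![algebraMap F A r, 0; 0, algebraMap F A r] := by
  ext i j
  fin_cases i <;> fin_cases j <;>
    simp [Matrix.algebraMap_eq_diagonal, Matrix.diagonal_apply]

/-- Under the Vahlen isomorphism `φ : C(W) ≅ M₂(C(V))` one has
`φ(x') = α(φ x)`, `φ(x*) = β(φ x)` and `φ(x̄) = γ(φ x)`, where for
`A = [[a,b],[c,d]]`: `α A = [[a',-b'],[-c',d']]`, `β A = [[d̄,b̄],[c̄,ā]]`,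
`γ A = [[d*,-b*],[-c*,a*]]`.  (Here `x* = reverse x`, `x̄ = involute (reverse x)`.) -/
theorem stmt_8 {F : Type*} [Field F] (hchar : (2 : F) ≠ 0)
    {V : Type*} [AddCommGroup V] [Module F V] [FiniteDimensional F V]
    (S : LinearMap.BilinForm F V) (hS : ∀ x y, S x y = S y x)
    (hnd : ∀ x : V, (∀ y : V, S x y = 0) → x = 0)
    (Q : QuadraticForm F V) (hQ : ∀ v, Q v = -(S v v))
    (QW : QuadraticForm F (V × F × F))
    (hQW : ∀ p : V × F × F, QW p = -(S p.1 p.1 - p.2.1 * p.2.2))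
    (g : CliffordAlgebra QW →ₐ[F] Matrix (Fin 2) (Fin 2) (CliffordAlgebra Q))
    (hg : ∀ (v : V) (l₁ l₂ : F),
      g (ι QW (v, l₁, l₂)) = !![ι Q v, algebraMap F (CliffordAlgebra Q) l₁;
        algebraMap F (CliffordAlgebra Q) l₂, -(ι Q v)])
    (hbij : Function.Bijective g) :
    ∀ x : CliffordAlgebra QW,
      g (involute x) =
        !![involute (g x 0 0), -involute (g x 0 1);
           -involute (g x 1 0), involute (g x 1 1)] ∧
      g (reverse x) =
        !![involute (reverse (g x 1 1)), involute (reverse (g x 0 1));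
           involute (reverse (g x 1 0)), involute (reverse (g x 0 0))] ∧
      g (involute (reverse x)) =
        !![reverse (g x 1 1), -reverse (g x 0 1);
           -reverse (g x 1 0), reverse (g x 0 0)] := by
  intro x
  induction x using CliffordAlgebra.induction with
  | algebraMap r =>
      refine ⟨?_, ?_, ?_⟩ <;>
        simp [AlgHom.commutes, reverse.commutes, stmt_8_alg_lit]
  | ι v =>
      obtain ⟨v, l₁, l₂⟩ := v
      refine ⟨?_, ?_, ?_⟩ <;>
      · simp [hg, involute_ι, reverse_ι, map_neg]
  | mul x y hx hy =>
      obtain ⟨hx1, hx2, hx3⟩ := hx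
      obtain ⟨hy1, hy2, hy3⟩ := hy
      refine ⟨?_, ?_, ?_⟩
      · rw [map_mul, map_mul, hx1, hy1, map_mul]
        ext i j
        fin_cases i <;> fin_cases j <;>
          simp [Matrix.mul_apply, Fin.sum_univ_two, map_add, map_mul] <;> abel
      · rw [reverse.map_mul, map_mul, hx2, hy2, map_mul]
        ext i j
        fin_cases i <;> fin_cases j <;>
          simp [Matrix.mul_apply, Fin.sum_univ_two, map_add, map_mul, reverse.map_mul] <;> abel
      · rw [reverse.map_mul, map_mul, map_mul, hx3, hy3, map_mul]
        ext i j
        fin_cases i <;> fin_cases j <;>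
          simp [Matrix.mul_apply, Fin.sum_univ_two, map_add, map_mul, reverse.map_mul] <;> abel
  | add x y hx hy =>
      obtain ⟨hx1, hx2, hx3⟩ := hx
      obtain ⟨hy1, hy2, hy3⟩ := hy
      refine ⟨?_, ?_, ?_⟩ <;>
        simp only [map_add, hx1, hx2, hx3, hy1, hy2, hy3, stmt_8_add_lit, Matrix.add_apply,
          neg_add]
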